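/- arXiv:2409.19767 — 4 statements merged into one kernel-verified Lean document; each statement's English description precedes it below -/
import Mathlib

section
/- Let S = ω ∩ ℤ⁴. Then the Hilbert basis of S is {h₁, h₂, h₃, h₄, h₅, h₆, h₇}, where h₇ = (1, 2, −1, 0); that is, every element of S is an ℕ-linear combination of h₁, …, h₇, and no hᵢ (1 ≤ i ≤ 7) can be written as a sum of two nonzero elements of S. -/
/-- The seven lattice points `h₁, …, h₇` (0-indexed as `h 0, …, h 6`). -/
def h : Fin 7 → (Fin 4 → ℤ) :=
  ![![1,0,0,0], ![0,1,0,0], ![0,0,1,0], ![0,0,0,1],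
    ![2,3,-2,-1], ![1,3,-1,-1], ![1,2,-1,0]]

/-- Coercion of an integer vector to a real vector. -/
def toR (v : Fin 4 → ℤ) : Fin 4 → ℝ := fun j => (v j : ℝ)

/-- The convex cone generated by a finite family of vectors in `ℝ⁴`. -/
def cone {n : ℕ} (v : Fin n → (Fin 4 → ℝ)) : Set (Fin 4 → ℝ) :=
  {x | ∃ lam : Fin n → ℝ, (∀ i, 0 ≤ lam i) ∧ x = ∑ i, lam i • v i}

/-- The cone `ω` generated by `h₁, …, h₆`. -/
def ω : Set (Fin 4 → ℝ) := cone (fun i : Fin 6 => toR (h i.castSucc))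

/-- The semigroup `S = ω ∩ ℤ⁴`. -/
def S : Set (Fin 4 → ℤ) := {v | toR v ∈ ω}

/-!
Each of the six facet inequalities `v₀ ≥ 0`, `v₁ ≥ 0`, `v₀ + v₂ ≥ 0`, `v₀ + v₃ ≥ 0`,
`v₁ + 3v₃ ≥ 0`, `2v₁ + 3v₂ ≥ 0` holds on the generators `h₁, …, h₆`, hence on all of `S`.
Given `v` satisfying them, the negative parts of `v₂` and `v₃` are cancelled by a suitable
combination `u h₅ + w h₆ + t h₇`, and what remains is a nonnegative vector, i.e. an
`ℕ`-combination of the unit vectors `h₁, …, h₄`. Irreducibility of each `hᵢ` is a small linear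
integer problem: a splitting `hᵢ = a + b` with both summands satisfying the facet inequalities
forces `a = 0` or `b = 0`.
-/

open Matrix

theorem dotProduct_nonneg_of_mem_cone {n : ℕ} {v : Fin n → Fin 4 → ℝ} {w x : Fin 4 → ℝ}
    (hw : ∀ i, 0 ≤ w ⬝ᵥ v i) (hx : x ∈ cone v) : 0 ≤ w ⬝ᵥ x := by
  obtain ⟨lam, hlam, rfl⟩ := hx
  rw [dotProduct_sum]
  exact Finset.sum_nonneg fun i _ => by
    rw [dotProduct_smul, smul_eq_mul]
    exact mul_nonneg (hlam i) (hw i)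

theorem mem_cone_self {n : ℕ} (v : Fin n → Fin 4 → ℝ) (i : Fin n) : v i ∈ cone v :=
  ⟨Pi.single i 1, fun j => by by_cases hj : j = i <;> simp [hj], by simp [Pi.single_apply]⟩

theorem toR_dotProduct (w v : Fin 4 → ℤ) : toR w ⬝ᵥ toR v = ((w ⬝ᵥ v : ℤ) : ℝ) := by
  simp [toR, dotProduct]

def facetNormal : Fin 6 → Fin 4 → ℤ :=
  ![![1,0,0,0], ![0,1,0,0], ![1,0,1,0], ![1,0,0,1], ![0,1,0,3], ![0,2,3,0]]

theorem facetNormal_dotProduct_h_nonneg (k i : Fin 6) :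
    0 ≤ facetNormal k ⬝ᵥ h i.castSucc := by
  revert k i
  decide

theorem facetNormal_dotProduct_nonneg {v : Fin 4 → ℤ} (hv : v ∈ S) (k : Fin 6) :
    0 ≤ facetNormal k ⬝ᵥ v := by
  have hR := dotProduct_nonneg_of_mem_cone (w := toR (facetNormal k))
    (fun i => by rw [toR_dotProduct]; exact_mod_cast facetNormal_dotProduct_h_nonneg k i) hv
  rw [toR_dotProduct] at hR
  exact_mod_cast hR

theorem facet_ineqs_of_mem_S {v : Fin 4 → ℤ} (hv : v ∈ S) :
    0 ≤ v 0 ∧ 0 ≤ v 1 ∧ 0 ≤ v 0 + v 2 ∧ 0 ≤ v 0 + v 3 ∧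
    0 ≤ v 1 + 3 * v 3 ∧ 0 ≤ 2 * v 1 + 3 * v 2 := by
  have hk := facetNormal_dotProduct_nonneg hv
  simp [Fin.forall_fin_succ, facetNormal, dotProduct, Fin.sum_univ_four] at hk
  omega

theorem h_mem_S (i : Fin 7) : h i ∈ S := by
  cases i using Fin.lastCases with
  | cast i => exact mem_cone_self (fun i : Fin 6 => toR (h i.castSucc)) i
  | last =>
    -- `2 h₇ = h₂ + h₄ + h₅`
    refine ⟨![0, 1/2, 0, 1/2, 1/2, 0], fun i => by fin_cases i <;> norm_num, ?_⟩
    ext j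
    fin_cases j <;> simp [Fin.sum_univ_six, toR, h]
    norm_num

theorem exists_cancelling_multiples {v : Fin 4 → ℤ} (H1 : 0 ≤ v 0) (H2 : 0 ≤ v 1)
    (H3 : 0 ≤ v 0 + v 2) (H4 : 0 ≤ v 0 + v 3) (H5 : 0 ≤ v 1 + 3 * v 3)
    (H6 : 0 ≤ 2 * v 1 + 3 * v 2) :
    ∃ u w t : ℕ, 2 * u + w + t ≤ v 0 ∧ 3 * u + 3 * w + 2 * t ≤ v 1 ∧
      0 ≤ v 2 + (2 * u + w + t) ∧ 0 ≤ v 3 + (u + w) := by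
  set p := (-v 2).toNat
  set q := (-v 3).toNat
  -- aim at `2u + w + t = max p q` and `u + w ≥ q`; `h₇` is only needed when `p > 2q`
  by_cases hpq : p ≤ 2 * q
  · exact ⟨p - q, q - (p - q), 0, by omega, by omega, by omega, by omega⟩
  · exact ⟨p / 2, 0, p % 2, by omega, by omega, by omega, by omega⟩

theorem exists_nsmul_sum_h_of_facet_ineqs {v : Fin 4 → ℤ} (H1 : 0 ≤ v 0) (H2 : 0 ≤ v 1)
    (H3 : 0 ≤ v 0 + v 2) (H4 : 0 ≤ v 0 + v 3) (H5 : 0 ≤ v 1 + 3 * v 3)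
    (H6 : 0 ≤ 2 * v 1 + 3 * v 2) :
    ∃ c : Fin 7 → ℕ, v = ∑ i, c i • h i := by
  obtain ⟨u, w, t, hr0, hr1, hr2, hr3⟩ := exists_cancelling_multiples H1 H2 H3 H4 H5 H6
  refine ⟨![(v 0 - (2 * u + w + t)).toNat, (v 1 - (3 * u + 3 * w + 2 * t)).toNat,
    (v 2 + (2 * u + w + t)).toNat, (v 3 + (u + w)).toNat, u, w, t], ?_⟩
  ext j
  fin_cases j <;> simp [Fin.sum_univ_seven, h] <;> omega

theorem eq_zero_or_eq_zero_of_add_eq_h {a b : Fin 4 → ℤ} (ha : a ∈ S) (hb : b ∈ S) {i : Fin 7}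
    (hab : h i = a + b) : a = 0 ∨ b = 0 := by
  have := facet_ineqs_of_mem_S ha
  have := facet_ineqs_of_mem_S hb
  simp only [funext_iff, Fin.forall_fin_succ, Pi.add_apply] at hab ⊢
  fin_cases i <;> simp [h] at hab ⊢ <;> omega

/-- The Hilbert basis of `S = ω ∩ ℤ⁴` is `{h₁, …, h₇}`. -/
theorem stmt_0 :
    (∀ i, h i ∈ S) ∧
    (∀ v ∈ S, ∃ c : Fin 7 → ℕ, v = ∑ i, c i • h i) ∧
    (∀ i : Fin 7, ¬ ∃ a ∈ S, ∃ b ∈ S, a ≠ 0 ∧ b ≠ 0 ∧ h i = a + b) := by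
  refine ⟨h_mem_S, fun v hv => ?_, ?_⟩
  · obtain ⟨H1, H2, H3, H4, H5, H6⟩ := facet_ineqs_of_mem_S hv
    exact exists_nsmul_sum_h_of_facet_ineqs H1 H2 H3 H4 H5 H6
  · rintro i ⟨a, ha, b, hb, ha0, hb0, hab⟩
    exact (eq_zero_or_eq_zero_of_add_eq_h ha hb hab).elim ha0 hb0
end

section
/- The only nonzero integer vector in the half-open fundamental parallelepiped {λ₁h₁ + λ₂h₂ + λ₄h₄ + λ₅h₅ : 0 ≤ λᵢ < 1} of the simplicial cone Cone(h₁,h₂,h₄,h₅) is h₇ = (1, 2, −1, 0), and it satisfies 2·h₇ = h₂ + h₄ + h₅; in particular h₇ lies in the cone Cone(h₂,h₄,h₅). -/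
/-!
The basis `h₁, h₂, h₄, h₅` has determinant `-2`, so twice the coordinates `λᵢ` of an integer vector
are integers. Membership in the half-open parallelepiped becomes `0 ≤ 2λᵢ < 2` for these four
integers, a linear system whose only integer solutions are `0` and `h₇`, the latter with
coordinates `(0, ½, ½, ½)`.
-/

/-- The lattice points `h₁, h₂, h₄, h₅` (in this order). -/
def h1 : Fin 4 → ℤ := ![1,0,0,0]
def h2 : Fin 4 → ℤ := ![0,1,0,0]
def h4 : Fin 4 → ℤ := ![0,0,0,1]
def h5 : Fin 4 → ℤ := ![2,3,-2,-1]
def h7 : Fin 4 → ℤ := ![1,2,-1,0]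

/-- The half-open fundamental parallelepiped of the simplicial cone `Cone(h₁,h₂,h₄,h₅)`,
consisting of points `λ₁h₁ + λ₂h₂ + λ₄h₄ + λ₅h₅` with `0 ≤ λᵢ < 1`. -/
def fundPar : Set (Fin 4 → ℝ) :=
  {x | ∃ lam : Fin 4 → ℝ, (∀ i, 0 ≤ lam i ∧ lam i < 1) ∧
    x = ∑ i, lam i • ![toR h1, toR h2, toR h4, toR h5] i}

/-- Coordinates with respect to the basis `h₁, h₂, h₄, h₅`: the inverse of the basis matrix. -/
noncomputable def parCoords (x : Fin 4 → ℝ) : Fin 4 → ℝ :=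
  ![x 0 + x 2, x 1 + 3 / 2 * x 2, x 3 - x 2 / 2, -x 2 / 2]

lemma sum_smul_basis (lam : Fin 4 → ℝ) :
    ∑ i, lam i • ![toR h1, toR h2, toR h4, toR h5] i =
      ![lam 0 + 2 * lam 3, lam 1 + 3 * lam 3, -2 * lam 3, lam 2 - lam 3] := by
  funext j
  fin_cases j <;> simp [Fin.sum_univ_four, toR, h1, h2, h4, h5] <;> ring

lemma sum_smul_basis_eq_iff (x lam : Fin 4 → ℝ) :
    x = ∑ i, lam i • ![toR h1, toR h2, toR h4, toR h5] i ↔ lam = parCoords x := by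
  rw [sum_smul_basis]
  constructor <;> rintro rfl <;> funext j <;> fin_cases j <;> simp [parCoords] <;> ring

lemma mem_fundPar_iff (x : Fin 4 → ℝ) : x ∈ fundPar ↔ ∀ i, parCoords x i ∈ Set.Ico 0 1 := by
  simp only [fundPar, sum_smul_basis_eq_iff, Set.mem_ofPred_eq, Set.mem_Ico]
  exact ⟨fun ⟨_, hlam, hx⟩ => hx ▸ hlam, fun h => ⟨_, h, rfl⟩⟩

def twiceParCoords (v : Fin 4 → ℤ) : Fin 4 → ℤ :=
  ![2 * (v 0 + v 2), 2 * v 1 + 3 * v 2, 2 * v 3 - v 2, -v 2]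

lemma parCoords_toR (v : Fin 4 → ℤ) (i : Fin 4) :
    parCoords (toR v) i = (twiceParCoords v i : ℝ) / 2 := by
  fin_cases i <;> simp [parCoords, twiceParCoords, toR] <;> ring

lemma intCast_div_two_mem_Ico_iff (z : ℤ) : (z : ℝ) / 2 ∈ Set.Ico 0 1 ↔ 0 ≤ z ∧ z < 2 := by
  rw [Set.mem_Ico, le_div_iff₀ two_pos, div_lt_iff₀ two_pos, zero_mul, one_mul]
  norm_cast

lemma toR_mem_fundPar_iff (v : Fin 4 → ℤ) :
    toR v ∈ fundPar ↔ ∀ i, 0 ≤ twiceParCoords v i ∧ twiceParCoords v i < 2 := by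
  simp only [mem_fundPar_iff, parCoords_toR, intCast_div_two_mem_Ico_iff]

lemma toR_mem_fundPar_iff_eq_zero_or_eq_h7 (v : Fin 4 → ℤ) :
    toR v ∈ fundPar ↔ v = 0 ∨ v = h7 := by
  simp only [toR_mem_fundPar_iff, Fin.forall_fin_succ, twiceParCoords, funext_iff, h7,
    Fin.succ_zero_eq_one, Fin.succ_one_eq_two, Fin.reduceSucc, Matrix.cons_val, Pi.zero_apply,
    IsEmpty.forall_iff, and_true]
  omega

/-- The only nonzero integer vector in the half-open fundamental parallelepiped of
`Cone(h₁,h₂,h₄,h₅)` is `h₇ = (1,2,−1,0)`, which satisfies `2·h₇ = h₂ + h₄ + h₅`;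
in particular `h₇ ∈ Cone(h₂,h₄,h₅)`. -/
theorem stmt_3 :
    (∀ v : Fin 4 → ℤ, (v ≠ 0 ∧ toR v ∈ fundPar) ↔ v = h7) ∧
    (2 : ℕ) • h7 = h2 + h4 + h5 ∧
    toR h7 ∈ cone ![toR h2, toR h4, toR h5] := by
  have h7_ne_zero : h7 ≠ 0 := fun h => by simpa [h7] using congrFun h 0
  have two_h7 : (2 : ℕ) • h7 = h2 + h4 + h5 := by decide
  refine ⟨fun v => ?_, two_h7, fun _ => 1 / 2, fun _ => by norm_num, ?_⟩
  · rw [toR_mem_fundPar_iff_eq_zero_or_eq_h7]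
    constructor
    · rintro ⟨hv, rfl | rfl⟩
      exacts [absurd rfl hv, rfl]
    · rintro rfl
      exact ⟨h7_ne_zero, Or.inr rfl⟩
  · funext j
    have hj : (2 * h7 j : ℝ) = h2 j + h4 j + h5 j := by
      exact_mod_cast by simpa using congrFun two_h7 j
    simp [Fin.sum_univ_three, toR]
    linarith
end

section
/- The additive subsemigroup of ℤ⁴ generated by the set 𝒢 = {h₁, h₂, h₃, h₄, h₅, h₆, h₇, h₄−h₁, h₆−h₁, h₇−h₁, h₄−h₂, h₇−h₂, h₄−h₃, h₆−h₃, h₇−h₃, h₄−h₅, h₆−h₅} is equal to the additive subsemigroup of ℤ⁴ generated by the seven-element set H = {h₁, h₄−h₂, h₇−h₂, h₄−h₃, h₆−h₃, h₄−h₅, h₆−h₅}. -/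
/-- The generating set `𝒢 = ℋ(S) ∪ 𝒢_A(h₁) ∪ ⋯ ∪ 𝒢_A(h₅)` of the chart semigroup. -/
def G : Set (Fin 4 → ℤ) :=
  {h 0, h 1, h 2, h 3, h 4, h 5, h 6,
   h 3 - h 0, h 5 - h 0, h 6 - h 0,
   h 3 - h 1, h 6 - h 1,
   h 3 - h 2, h 5 - h 2, h 6 - h 2,
   h 3 - h 4, h 5 - h 4}

/-- The seven-element generating set `H`. -/
def H : Set (Fin 4 → ℤ) :=
  {h 0, h 3 - h 1, h 6 - h 1, h 3 - h 2, h 5 - h 2, h 3 - h 4, h 5 - h 4}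

/-- The subsemigroup (with 0) of `ℤ⁴` generated by `𝒢` equals the one generated by `H`. -/
theorem stmt_6 : AddSubmonoid.closure G = AddSubmonoid.closure H := by
  apply le_antisymm
  · rw [AddSubmonoid.closure_le]
    have ha : h 0 ∈ AddSubmonoid.closure H :=
      AddSubmonoid.subset_closure (by left; rfl)
    have hb : h 3 - h 1 ∈ AddSubmonoid.closure H :=
      AddSubmonoid.subset_closure (by right; left; rfl)
    have hc : h 6 - h 1 ∈ AddSubmonoid.closure H :=
      AddSubmonoid.subset_closure (by right; right; left; rfl)
    have hd : h 3 - h 2 ∈ AddSubmonoid.closure H :=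
      AddSubmonoid.subset_closure (by right; right; right; left; rfl)
    have he : h 5 - h 2 ∈ AddSubmonoid.closure H :=
      AddSubmonoid.subset_closure (by right; right; right; right; left; rfl)
    have hf : h 3 - h 4 ∈ AddSubmonoid.closure H :=
      AddSubmonoid.subset_closure (by right; right; right; right; right; left; rfl)
    have hg : h 5 - h 4 ∈ AddSubmonoid.closure H :=
      AddSubmonoid.subset_closure (by right; right; right; right; right; right; rfl)
    intro x hx
    simp only [G, Set.mem_insert_iff, Set.mem_singleton_iff] at hx
    rcases hx with rfl|rfl|rfl|rfl|rfl|rfl|rfl|rfl|rfl|rfl|rfl|rfl|rfl|rfl|rfl|rfl|rfl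
    · exact ha
    · have : h 1 = (h 6 - h 1) + (h 5 - h 4) := by decide
      rw [this]; exact add_mem hc hg
    · have : h 2 = h 0 + (h 5 - h 4) := by decide
      rw [this]; exact add_mem ha hg
    · have : h 3 = (h 3 - h 1) + (h 6 - h 1) + (h 5 - h 4) := by decide
      rw [this]; exact add_mem (add_mem hb hc) hg
    · have : h 4 = h 0 + (h 5 - h 2) := by decide
      rw [this]; exact add_mem ha he
    · have : h 5 = h 0 + (h 5 - h 2) + (h 5 - h 4) := by decide
      rw [this]; exact add_mem (add_mem ha he) hg
    · have : h 6 = (h 6 - h 1) + (h 6 - h 1) + (h 5 - h 4) := by decide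
      rw [this]; exact add_mem (add_mem hc hc) hg
    · have : h 3 - h 0 = (h 3 - h 2) + (h 5 - h 4) := by decide
      rw [this]; exact add_mem hd hg
    · have : h 5 - h 0 = (h 5 - h 2) + (h 5 - h 4) := by decide
      rw [this]; exact add_mem he hg
    · have : h 6 - h 0 = (h 3 - h 1) + (h 5 - h 2) + (h 5 - h 4) := by decide
      rw [this]; exact add_mem (add_mem hb he) hg
    · exact hb
    · exact hc
    · exact hd
    · exact he
    · have : h 6 - h 2 = (h 3 - h 1) + (h 5 - h 2) := by decide
      rw [this]; exact add_mem hb he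
    · exact hf
    · exact hg
  · apply AddSubmonoid.closure_mono
    intro x hx
    simp only [H, Set.mem_insert_iff, Set.mem_singleton_iff] at hx
    simp only [G, Set.mem_insert_iff, Set.mem_singleton_iff]
    tauto
end

section
/- Let S₂ = ω₂ ∩ ℤ⁴. Then the Hilbert basis of S₂ is {g₁, g₂, g₃, g₄, g₅, g₆, g₇}, where g₆ = (1, 1, 1, 0) and g₇ = (0, 1, 1, 1); that is, every element of S₂ is an ℕ-linear combination of g₁, …, g₇, and no gᵢ (1 ≤ i ≤ 7) can be written as a sum of two nonzero elements of S₂. -/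
/-- The seven lattice points `g₁, …, g₇` (0-indexed as `g 0, …, g 6`). -/
def g : Fin 7 → (Fin 4 → ℤ) :=
  ![![1,0,0,0], ![0,1,0,0], ![1,1,2,0], ![0,0,0,1],
    ![0,2,2,1], ![1,1,1,0], ![0,1,1,1]]

/-- The cone `ω₂` generated by `g₁, …, g₅`. -/
def ω₂ : Set (Fin 4 → ℝ) := cone (fun i : Fin 5 => toR (g (Fin.castLE (by norm_num) i)))

/-- The semigroup `S₂ = ω₂ ∩ ℤ⁴`. -/
def S₂ : Set (Fin 4 → ℤ) := {v | toR v ∈ ω₂}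

/-!
`ω₂` is cut out by the six facet inequalities
`x₀ ≥ 0, x₂ ≥ 0, x₃ ≥ 0, x₂ ≤ 2x₁, x₂ ≤ x₀ + x₁, x₂ ≤ 2x₀ + 2x₃`.
With this description, indecomposability of each `gᵢ` is a finite check in linear integer
arithmetic, and every lattice point of `ω₂` is an explicit nonnegative integer combination of
`g₁, …, g₇`.
-/

lemma sum_smul_generators_ω₂ (l : Fin 5 → ℝ) :
    ∑ i, l i • toR (g (Fin.castLE (by norm_num) i)) =
      ![l 0 + l 2, l 1 + l 2 + 2 * l 4, 2 * l 2 + 2 * l 4, l 3 + l 4] := by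
  funext j
  fin_cases j <;> simp [Fin.sum_univ_five, g, toR] <;> ring

lemma mem_ω₂_iff (x : Fin 4 → ℝ) :
    x ∈ ω₂ ↔ 0 ≤ x 0 ∧ 0 ≤ x 2 ∧ 0 ≤ x 3 ∧ x 2 ≤ 2 * x 1 ∧ x 2 ≤ x 0 + x 1 ∧
      x 2 ≤ 2 * x 0 + 2 * x 3 := by
  simp only [ω₂, cone, Set.mem_ofPred_eq, sum_smul_generators_ω₂]
  constructor
  · rintro ⟨l, hl, rfl⟩
    have := hl 0; have := hl 1; have := hl 2; have := hl 3; have := hl 4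
    simp only [Matrix.cons_val]
    refine ⟨?_, ?_, ?_, ?_, ?_, ?_⟩ <;> linarith
  · rintro ⟨h0, h2, h3, h21, h201, h203⟩
    -- the weight of `g₅` must be at least `x₂/2 - x₀`, and taking it minimal keeps the rest nonnegative
    set t : ℝ := max 0 (x 2 / 2 - x 0)
    have ht0 : 0 ≤ t := le_max_left _ _
    have ht : x 2 / 2 - x 0 ≤ t := le_max_right _ _
    have ht2 : t ≤ x 2 / 2 := max_le (by linarith) (by linarith)
    have ht1 : t ≤ x 1 - x 2 / 2 := max_le (by linarith) (by linarith)
    have ht3 : t ≤ x 3 := max_le (by linarith) (by linarith)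
    refine ⟨![x 0 - (x 2 / 2 - t), x 1 - x 2 / 2 - t, x 2 / 2 - t, x 3 - t, t], ?_, ?_⟩
    · intro i
      fin_cases i <;> simp <;> linarith
    · funext j
      fin_cases j <;> simp <;> ring

lemma mem_S₂_iff (v : Fin 4 → ℤ) :
    v ∈ S₂ ↔ 0 ≤ v 0 ∧ 0 ≤ v 2 ∧ 0 ≤ v 3 ∧ v 2 ≤ 2 * v 1 ∧ v 2 ≤ v 0 + v 1 ∧
      v 2 ≤ 2 * v 0 + 2 * v 3 := by
  simp only [S₂, Set.mem_ofPred_eq, mem_ω₂_iff, toR]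
  norm_cast

lemma g_mem_S₂ (i : Fin 7) : g i ∈ S₂ := by
  rw [mem_S₂_iff]
  fin_cases i <;> decide

lemma sum_zsmul_g (c : Fin 7 → ℤ) :
    ∑ i, c i • g i = ![c 0 + c 2 + c 5, c 1 + c 2 + 2 * c 4 + c 5 + c 6,
      2 * c 2 + 2 * c 4 + c 5 + c 6, c 3 + c 4 + c 6] := by
  funext j
  fin_cases j <;> simp [Fin.sum_univ_seven, g] <;> ring

lemma exists_nonneg_zsmul_g_of_mem_S₂ {v : Fin 4 → ℤ} (hv : v ∈ S₂) :
    ∃ c : Fin 7 → ℤ, (∀ i, 0 ≤ c i) ∧ v = ∑ i, c i • g i := by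
  obtain ⟨h0, h2, h3, h21, h201, h203⟩ := (mem_S₂_iff v).1 hv
  obtain ⟨n₃, n₅, n₆, n₇, h₃, h₅, h₆, h₇, hsum, h36, h57, h3'⟩ :
      ∃ n₃ n₅ n₆ n₇ : ℤ, 0 ≤ n₃ ∧ 0 ≤ n₅ ∧ 0 ≤ n₆ ∧ 0 ≤ n₇ ∧
        2 * n₃ + 2 * n₅ + n₆ + n₇ = v 2 ∧ n₃ + n₆ ≤ v 0 ∧ n₅ + n₇ ≤ v 3 ∧ v 2 - v 1 ≤ n₃ := by
    -- `x₂` is produced by `g₃, g₆` alone while `x₂ ≤ 2x₀`; beyond that, `g₃` is used up to `x₀`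
    -- and the remainder comes from `g₅, g₇`
    rcases le_or_gt (v 2) (2 * v 0) with h | h
    · exact ⟨max (max 0 (v 2 - v 0)) (v 2 - v 1), 0,
        v 2 - 2 * max (max 0 (v 2 - v 0)) (v 2 - v 1), 0,
        by omega, by omega, by omega, by omega, by omega, by omega, by omega, by omega⟩
    · exact ⟨v 0, max 0 (v 2 - 2 * v 0 - v 3), 0, v 2 - 2 * v 0 - 2 * max 0 (v 2 - 2 * v 0 - v 3),
        by omega, by omega, by omega, by omega, by omega, by omega, by omega, by omega⟩
  refine ⟨![v 0 - n₃ - n₆, v 1 - v 2 + n₃, n₃, v 3 - n₅ - n₇, n₅, n₆, n₇], ?_, ?_⟩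
  · intro i
    fin_cases i <;> simp <;> omega
  · rw [sum_zsmul_g]
    funext j
    fin_cases j <;> simp <;> omega

lemma exists_nsmul_eq_of_nonneg_zsmul {ι M : Type*} [Fintype ι] [AddCommGroup M] {v : M}
    {w : ι → M} {c : ι → ℤ} (hc : ∀ i, 0 ≤ c i) (hv : v = ∑ i, c i • w i) :
    ∃ n : ι → ℕ, v = ∑ i, n i • w i :=
  ⟨fun i => (c i).toNat, by simp only [hv, ← natCast_zsmul, Int.toNat_of_nonneg (hc _)]⟩

lemma eq_zero_or_eq_zero_of_g_eq_add {i : Fin 7} {a b : Fin 4 → ℤ} (ha : a ∈ S₂) (hb : b ∈ S₂)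
    (hab : g i = a + b) : a = 0 ∨ b = 0 := by
  rw [mem_S₂_iff] at ha hb
  have h j : g i j = a j + b j := congrFun hab j
  have h0 := h 0; have h1 := h 1; have h2 := h 2; have h3 := h 3
  simp only [funext_iff, Pi.zero_apply, Fin.forall_fin_succ, Fin.isValue, Fin.succ_zero_eq_one,
    Fin.succ_one_eq_two, Fin.reduceSucc, IsEmpty.forall_iff, and_true]
  fin_cases i <;> simp [g] at h0 h1 h2 h3 <;> omega

/-- The Hilbert basis of `S₂ = ω₂ ∩ ℤ⁴` is `{g₁, …, g₇}`,
where `g₆ = (1,1,1,0)` and `g₇ = (0,1,1,1)`. -/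
theorem stmt_10 :
    (∀ i, g i ∈ S₂) ∧
    (∀ v ∈ S₂, ∃ c : Fin 7 → ℕ, v = ∑ i, c i • g i) ∧
    (∀ i : Fin 7, ¬ ∃ a ∈ S₂, ∃ b ∈ S₂, a ≠ 0 ∧ b ≠ 0 ∧ g i = a + b) := by
  refine ⟨g_mem_S₂, fun v hv => ?_, ?_⟩
  · obtain ⟨c, hc, hv⟩ := exists_nonneg_zsmul_g_of_mem_S₂ hv
    exact exists_nsmul_eq_of_nonneg_zsmul hc hv
  · rintro i ⟨a, ha, b, hb, ha0, hb0, hab⟩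
    exact (eq_zero_or_eq_zero_of_g_eq_add ha hb hab).elim ha0 hb0
end
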